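/- arXiv:1110.4490 — 2 statements merged into one kernel-verified Lean document; each statement's English description precedes it below -/
import Mathlib

section
/- Let K be a field of characteristic zero and let P : K^n → K be a bisymmetric polynomial function of degree p ≥ 2 whose homogeneous component of degree p is the monomial P_p(x) = c·x^γ with c ≠ 0 and |γ| = p. Suppose P ≠ P_p, let q < p be the degree of P − P_p and let P_q be the homogeneous component of degree q of P. Then for all x ∈ K^n, c·p·P_q(x)·∏_{j=1}^n x_j^{p−q} = P_q(1,…,1)·P_p(x)·Σ_{j=1}^n γ_j·∏_{i ≠ j} x_i^{p−q} (this is the identity P_q(x) = (P_q(1,…,1)/(c·p))·P_p(x)·Σ_{j=1}^n γ_j/x_j^{p−q} after clearing denominators). -/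
/-!
Write `e = p - q`. The degree-`p` homogenization `H(s, v) = ∑ₖ s^(p-k) Pₖ(v)` satisfies
`H(s, v) = sᵖ P(v / s)` for `s ≠ 0`, so bisymmetry of `P` at the matrix `Y / s` becomes
`H(sᵖ, (H(s, Yᵢ))ᵢ) = H(sᵖ, (H(s, Yʲ))ⱼ)`, a polynomial identity in `s` which therefore
holds in `K[s] ⧸ (s^(e+1))`. There `ε = sᵉ` squares to zero and all components of `P` except
`P_p` and `P_q` drop out: with `Yᵢⱼ = yⱼ`, both sides become the monomial `c xᵞ` evaluated at
first-order perturbations `uᵢ (1 + δᵢ ε)`, and comparing the coefficients of `ε` gives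
`p P_q(y) / P_p(y) = ∑ⱼ γⱼ P_q(1) / (c yⱼᵉ)` whenever no `yⱼ` vanishes.
Clearing denominators and Zariski density give the identity everywhere.
-/

open Finset

/-- A function `f : S^n → S` is bisymmetric if for every `n × n` matrix `X` over `S`,
applying `f` to the rows and then to the results equals applying `f` to the columns
and then to the results. -/
def Bisym {S : Type*} {n : ℕ} (f : (Fin n → S) → S) : Prop :=
  ∀ X : Fin n → Fin n → S,
    f (fun i => f (X i)) = f (fun j => f (fun i => X i j))

section SquareZero

variable {A ι : Type*} [CommRing A] {ε : A}

lemma one_add_mul_pow_of_sq_eq_zero (hε : ε ^ 2 = 0) (δ : A) (m : ℕ) :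
    (1 + δ * ε) ^ m = 1 + m * δ * ε := by
  simpa [mul_assoc, Polynomial.derivative_X_pow] using Polynomial.eval_add_of_sq_eq_zero
    (Polynomial.X ^ m) 1 (δ * ε) (by rw [mul_pow, hε, mul_zero])

lemma prod_one_add_mul_pow_of_sq_eq_zero (hε : ε ^ 2 = 0) (t : Finset ι) (δ : ι → A)
    (m : ι → ℕ) :
    ∏ j ∈ t, (1 + δ j * ε) ^ m j = 1 + (∑ j ∈ t, m j * δ j) * ε := by
  classical
  induction t using Finset.induction_on with
  | empty => simp
  | insert j t hj ih =>
    rw [prod_insert hj, sum_insert hj, ih, one_add_mul_pow_of_sq_eq_zero hε]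
    linear_combination (m j * δ j * ∑ i ∈ t, m i * δ i) * hε

lemma algebraMap_add_mul_eq_mul_one_add {K : Type*} [Field K] [Algebra K A] {u : K} (hu : u ≠ 0)
    (w : K) (ε : A) :
    algebraMap K A u + ε * algebraMap K A w =
      algebraMap K A u * (1 + algebraMap K A (w / u) * ε) := by
  rw [mul_add, mul_one, ← mul_assoc, ← map_mul, mul_div_cancel₀ _ hu, mul_comm ε]

end SquareZero

namespace Polynomial

lemma eq_of_algebraMap_mul_one_add_mk_X_pow_eq {K : Type*} [Field K] {e : ℕ} {u β β' : K}
    (hu : u ≠ 0)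
    (h : algebraMap K (K[X] ⧸ Ideal.span {(X ^ (e + 1) : K[X])}) u *
        (1 + algebraMap K _ β * Ideal.Quotient.mk _ X ^ e) =
      algebraMap K (K[X] ⧸ Ideal.span {(X ^ (e + 1) : K[X])}) u *
        (1 + algebraMap K _ β' * Ideal.Quotient.mk _ X ^ e)) :
    β = β' := by
  replace h := add_left_cancel ((hu.isUnit.map (algebraMap K _)).mul_left_cancel h)
  rw [← Ideal.Quotient.mk_algebraMap, ← Ideal.Quotient.mk_algebraMap, ← map_pow, ← map_mul,
    ← map_mul, Ideal.Quotient.eq, Ideal.mem_span_singleton, algebraMap_eq, ← sub_mul,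
    X_pow_dvd_iff] at h
  have h := h e e.lt_succ_self
  rwa [← C_sub, coeff_C_mul_X_pow, if_pos rfl, sub_eq_zero] at h

end Polynomial

namespace MvPolynomial

variable {σ R A : Type*}

lemma IsHomogeneous.aeval_mul_left [CommSemiring R] [CommSemiring A] [Algebra R A]
    {φ : MvPolynomial σ R} {k : ℕ} (hφ : φ.IsHomogeneous k) (s : A) (v : σ → A) :
    MvPolynomial.aeval (fun i => s * v i) φ = s ^ k * MvPolynomial.aeval v φ := by
  conv_lhs => rw [φ.as_sum]
  conv_rhs => rw [φ.as_sum]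
  simp only [map_sum, aeval_monomial, mul_sum]
  refine sum_congr rfl fun d hd => ?_
  simp only [Finsupp.prod, mul_pow, prod_mul_distrib, prod_pow_eq_pow_sum,
    ← hφ.degree_eq_sum_deg_support hd]
  ring

lemma homogeneousComponent_eq_zero_of_totalDegree_sub_lt [CommRing R] {P : MvPolynomial σ R}
    {p k : ℕ} (hk : (P - homogeneousComponent p P).totalDegree < k) (hkp : k ≠ p) :
    homogeneousComponent k P = 0 := by
  have h := congrArg (homogeneousComponent k) (sub_add_cancel P (homogeneousComponent p P))
  rwa [map_add, homogeneousComponent_eq_zero _ _ hk, homogeneousComponent_of_mem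
    (homogeneousComponent_mem p P), if_neg hkp, add_zero, eq_comm] at h

lemma aeval_algebraMap_eq_algebraMap_eval [CommSemiring R] [CommSemiring A] [Algebra R A]
    (F : MvPolynomial σ R) (y : σ → R) :
    aeval (fun i => algebraMap R A (y i)) F = algebraMap R A (eval y F) := by
  simpa using (comp_aeval_apply (f := y) (Algebra.ofId R A) F).symm

lemma eval_monomial_ne_zero [Fintype σ] [CommRing R] [IsDomain R] {γ : σ →₀ ℕ} {c : R}
    (hc : c ≠ 0) {y : σ → R} (hy : ∀ i, y i ≠ 0) : eval y (monomial γ c) ≠ 0 := by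
  rw [eval_monomial, Finsupp.prod_pow]
  exact mul_ne_zero hc (prod_ne_zero_iff.2 fun i _ => pow_ne_zero _ (hy i))

lemma aeval_mul_one_add_of_eq_monomial [Fintype σ] [CommSemiring R] [CommRing A] [Algebra R A]
    {ε : A} (hε : ε ^ 2 = 0) {F : MvPolynomial σ R} {γ : σ →₀ ℕ} {c : R}
    (hF : F = monomial γ c) (u δ : σ → R) :
    aeval (fun i => algebraMap R A (u i) * (1 + algebraMap R A (δ i) * ε)) F =
      algebraMap R A (c * ∏ i, u i ^ γ i) * (1 + algebraMap R A (∑ i, γ i * δ i) * ε) := by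
  rw [hF, aeval_monomial, Finsupp.prod_pow]
  simp only [mul_pow, prod_mul_distrib, prod_one_add_mul_pow_of_sq_eq_zero hε, map_mul, map_prod,
    map_pow, map_sum, map_natCast]
  ring

lemma eval_eq_of_forall_ne_zero [CommRing R] [IsDomain R] [Infinite R] {F G : MvPolynomial σ R}
    (h : ∀ y : σ → R, (∀ i, y i ≠ 0) → eval y F = eval y G) (x : σ → R) :
    eval x F = eval x G := by
  rw [funext_set (fun _ => {0}ᶜ) (fun _ => (Set.finite_singleton 0).infinite_compl)
    fun y hy => h y fun i => hy i trivial]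

end MvPolynomial

section HomogenizedEval

open MvPolynomial

variable {σ R A : Type*} [CommSemiring A]

noncomputable def homogenizedEval [CommSemiring R] [Algebra R A] (P : MvPolynomial σ R) (p : ℕ)
    (s : A) (v : σ → A) : A :=
  ∑ k ∈ range (p + 1), s ^ (p - k) * aeval v (homogeneousComponent k P)

lemma map_homogenizedEval [CommSemiring R] [Algebra R A] {B : Type*} [CommSemiring B]
    [Algebra R B] (φ : A →ₐ[R] B) (P : MvPolynomial σ R) (p : ℕ) (s : A) (v : σ → A) :
    φ (homogenizedEval P p s v) = homogenizedEval P p (φ s) (fun i => φ (v i)) := by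
  simp [homogenizedEval, comp_aeval_apply]

lemma homogenizedEval_eq_pow_mul_eval {K : Type*} [Field K] {P : MvPolynomial σ K} {p : ℕ}
    (hP : P.totalDegree ≤ p) {s : K} (hs : s ≠ 0) (v : σ → K) :
    homogenizedEval P p s v = s ^ p * eval (fun i => s⁻¹ * v i) P := by
  have hsum : ∑ k ∈ range (p + 1), homogeneousComponent k P = P := by
    rw [← sum_subset (range_subset_range.2 (Nat.succ_le_succ hP)), sum_homogeneousComponent]
    intro k _ hk
    exact homogeneousComponent_eq_zero _ _ (by simpa using hk)
  conv_rhs => rw [← hsum]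
  rw [map_sum, mul_sum]
  refine sum_congr rfl fun k hk => ?_
  rw [← aeval_eq_eval, (homogeneousComponent_isHomogeneous k P).aeval_mul_left,
    pow_sub₀ _ hs (Nat.lt_succ_iff.1 (mem_range.1 hk)), inv_pow, aeval_eq_eval]
  ring

lemma homogenizedEval_of_pow_eq_zero [CommRing R] [Algebra R A] {P : MvPolynomial σ R} {p q : ℕ}
    (hP : (P - homogeneousComponent p P).totalDegree ≤ q) (hqp : q < p)
    {s : A} (hs : s ^ (p - q + 1) = 0) (v : σ → A) :
    homogenizedEval P p s v =
      aeval v (homogeneousComponent p P) + s ^ (p - q) * aeval v (homogeneousComponent q P) := by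
  rw [homogenizedEval, sum_eq_add_of_mem p q (by simp) (by simp; omega) hqp.ne',
    Nat.sub_self, pow_zero, one_mul]
  rintro k hk ⟨hkp, hkq⟩
  rcases lt_or_gt_of_ne hkq with hlt | hgt
  · rw [pow_eq_zero_of_le (by omega) hs, zero_mul]
  · rw [homogeneousComponent_eq_zero_of_totalDegree_sub_lt (by omega) hkp, map_zero, mul_zero]

lemma homogenizedEval_pow_of_pow_eq_zero [CommRing R] [Algebra R A] {P : MvPolynomial σ R}
    {p q : ℕ} (hP : (P - homogeneousComponent p P).totalDegree ≤ q) (hqp : q < p) (hp : 2 ≤ p)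
    {s : A} (hs : s ^ (p - q + 1) = 0) (v : σ → A) :
    homogenizedEval P p (s ^ p) v = aeval v (homogeneousComponent p P) := by
  have hsp : (s ^ p) ^ (p - q) = 0 := by
    rw [← pow_mul]
    exact pow_eq_zero_of_le ((show p - q + 1 ≤ 2 * (p - q) by omega).trans
      (Nat.mul_le_mul_right _ hp)) hs
  rw [homogenizedEval_of_pow_eq_zero hP hqp (by rw [pow_succ, hsp, zero_mul]), hsp, zero_mul,
    add_zero]

end HomogenizedEval

namespace Bisym

open MvPolynomial

variable {K : Type*} [Field K] {n p q : ℕ} {P : MvPolynomial (Fin n) K}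

theorem homogenizedEval_pow (hbi : Bisym fun x : Fin n → K => eval x P)
    (hP : P.totalDegree ≤ p) {s : K} (hs : s ≠ 0) (Y : Fin n → Fin n → K) :
    homogenizedEval P p (s ^ p) (fun i => homogenizedEval P p s (Y i)) =
      homogenizedEval P p (s ^ p) (fun j => homogenizedEval P p s (fun i => Y i j)) := by
  simp only [homogenizedEval_eq_pow_mul_eval hP hs, homogenizedEval_eq_pow_mul_eval hP
    (pow_ne_zero p hs), inv_mul_cancel_left₀ (pow_ne_zero p hs)]
  exact congrArg _ (hbi fun i j => s⁻¹ * Y i j)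

theorem homogenizedEval_pow_algebraMap [Infinite K] (hbi : Bisym fun x : Fin n → K => eval x P)
    (hP : P.totalDegree ≤ p) {A : Type*} [CommRing A] [Algebra K A] (s : A)
    (Y : Fin n → Fin n → K) :
    homogenizedEval P p (s ^ p)
        (fun i => homogenizedEval P p s (fun j => algebraMap K A (Y i j))) =
      homogenizedEval P p (s ^ p)
        (fun j => homogenizedEval P p s (fun i => algebraMap K A (Y i j))) := by
  have hX : homogenizedEval P p (Polynomial.X ^ p)
        (fun i => homogenizedEval P p Polynomial.X (fun j => Polynomial.C (Y i j))) =
      homogenizedEval P p (Polynomial.X ^ p)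
        (fun j => homogenizedEval P p Polynomial.X (fun i => Polynomial.C (Y i j))) := by
    refine Polynomial.eq_of_infinite_eval_eq _ _
      ((Set.finite_singleton 0).infinite_compl.mono fun t ht => ?_)
    simp only [Set.mem_ofPred_eq, ← Polynomial.coe_aeval_eq_eval, map_homogenizedEval, map_pow,
      Polynomial.aeval_X, Polynomial.aeval_C, Algebra.algebraMap_self, RingHom.id_apply]
    exact hbi.homogenizedEval_pow hP ht Y
  simpa only [map_homogenizedEval, map_pow, Polynomial.aeval_X, Polynomial.aeval_C]
    using congrArg (Polynomial.aeval s) hX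

variable [Infinite K] {c : K} {γ : Fin n →₀ ℕ}

theorem natCast_mul_div_eq_sum (hbi : Bisym fun x : Fin n → K => eval x P)
    (hdeg : P.totalDegree ≤ p) (hp : 2 ≤ p) (hc : c ≠ 0) (hγ : ∑ i, γ i = p)
    (hPp : homogeneousComponent p P = monomial γ c)
    (hq : (P - homogeneousComponent p P).totalDegree ≤ q) (hqp : q < p)
    {y : Fin n → K} (hy : ∀ i, y i ≠ 0) :
    (p : K) * (eval y (homogeneousComponent q P) / eval y (homogeneousComponent p P)) =
      ∑ j, γ j * (y j ^ q * eval 1 (homogeneousComponent q P) / (y j ^ p * c)) := by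
  set Q := Polynomial K ⧸ Ideal.span {(Polynomial.X ^ (p - q + 1) : Polynomial K)}
  set s : Q := Ideal.Quotient.mk _ Polynomial.X
  have hs : s ^ (p - q + 1) = 0 := by
    rw [← map_pow, Ideal.Quotient.eq_zero_iff_mem]; exact Ideal.mem_span_singleton_self _
  have hε : (s ^ (p - q)) ^ 2 = 0 := by
    rw [← pow_mul]; exact pow_eq_zero_of_le (by omega) hs
  have hmono (v : Fin n → K) : eval v (homogeneousComponent p P) = c * ∏ i, v i ^ γ i := by
    rw [hPp, eval_monomial, Finsupp.prod_pow]
  have hone : eval 1 (homogeneousComponent p P) = c := by simp [hmono]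
  have hconst (k : ℕ) (t : K) :
      eval (fun _ => t) (homogeneousComponent k P) = t ^ k * eval 1 (homogeneousComponent k P) := by
    simpa using (homogeneousComponent_isHomogeneous k P).aeval_mul_left t (1 : Fin n → K)
  have hap : eval y (homogeneousComponent p P) ≠ 0 := hPp ▸ eval_monomial_ne_zero hc hy
  have hcol (j : Fin n) (w : K) (ε : Q) :
      algebraMap K Q (y j ^ p * c) + ε * algebraMap K Q w =
        algebraMap K Q (y j ^ p * c) * (1 + algebraMap K Q (w / (y j ^ p * c)) * ε) :=
    algebraMap_add_mul_eq_mul_one_add (mul_ne_zero (pow_ne_zero _ (hy j)) hc) w ε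
  have hleading :
      c * ∏ j, (y j ^ p * c) ^ γ j = c * ∏ i, eval y (homogeneousComponent p P) ^ γ i := by
    simp only [hmono, prod_pow_eq_pow_sum, hγ, mul_pow, prod_mul_distrib, ← pow_mul, mul_comm p]
    simp only [pow_mul, prod_pow]
    ring
  have hbisym := hbi.homogenizedEval_pow_algebraMap hdeg (A := Q) s (fun _ j => y j)
  simp only [homogenizedEval_pow_of_pow_eq_zero hq hqp hp hs,
    homogenizedEval_of_pow_eq_zero hq hqp hs, aeval_algebraMap_eq_algebraMap_eval, hconst,
    hone] at hbisym
  rw [algebraMap_add_mul_eq_mul_one_add hap] at hbisym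
  simp only [hcol] at hbisym
  rw [aeval_mul_one_add_of_eq_monomial hε hPp, aeval_mul_one_add_of_eq_monomial hε hPp,
    hleading] at hbisym
  rw [← Polynomial.eq_of_algebraMap_mul_one_add_mk_X_pow_eq
    (mul_ne_zero hc (prod_ne_zero_iff.2 fun i _ => pow_ne_zero _ hap)) hbisym, ← sum_mul,
    ← Nat.cast_sum, hγ]

theorem mul_eval_mul_prod_eq (hbi : Bisym fun x : Fin n → K => eval x P)
    (hdeg : P.totalDegree ≤ p) (hp : 2 ≤ p) (hc : c ≠ 0) (hγ : ∑ i, γ i = p)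
    (hPp : homogeneousComponent p P = monomial γ c)
    (hq : (P - homogeneousComponent p P).totalDegree ≤ q) (hqp : q < p)
    {y : Fin n → K} (hy : ∀ i, y i ≠ 0) :
    c * p * eval y (homogeneousComponent q P) * ∏ j, y j ^ (p - q) =
      eval 1 (homogeneousComponent q P) * eval y (homogeneousComponent p P) *
        ∑ j, (γ j : K) * ∏ i ∈ univ.erase j, y i ^ (p - q) := by
  have hkey := hbi.natCast_mul_div_eq_sum hdeg hp hc hγ hPp hq hqp hy
  have ha : eval y (homogeneousComponent p P) ≠ 0 := hPp ▸ eval_monomial_ne_zero hc hy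
  set a := eval y (homogeneousComponent p P)
  set b := eval 1 (homogeneousComponent q P)
  have hfrac (j : Fin n) : y j ^ q * b / (y j ^ p * c) = b / c / y j ^ (p - q) := by
    rw [pow_sub₀ _ (hy j) hqp.le]
    field_simp
  have herase (j : Fin n) :
      ∏ i ∈ univ.erase j, y i ^ (p - q) = (∏ i, y i ^ (p - q)) / y j ^ (p - q) := by
    rw [eq_div_iff (pow_ne_zero _ (hy j)), mul_comm,
      mul_prod_erase univ (fun i => y i ^ (p - q)) (mem_univ j)]
  simp only [hfrac] at hkey
  calc c * p * eval y (homogeneousComponent q P) * ∏ j, y j ^ (p - q)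
      = c * a * (∏ j, y j ^ (p - q)) * (p * (eval y (homogeneousComponent q P) / a)) := by
        field_simp
    _ = b * a * ∑ j, (γ j : K) * ∏ i ∈ univ.erase j, y i ^ (p - q) := by
        rw [hkey, mul_sum, mul_sum]
        refine sum_congr rfl fun j _ => ?_
        rw [herase]
        field_simp

end Bisym

theorem bisym_Pq_explicit_form_general
    {K : Type*} [Field K] [CharZero K] {n p q : ℕ}
    (P : MvPolynomial (Fin n) K)
    (hbi : Bisym fun x : Fin n → K => MvPolynomial.eval x P)
    (hdeg : P.totalDegree = p) (hp : 2 ≤ p)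
    (c : K) (hc : c ≠ 0) (γ : Fin n →₀ ℕ) (hγ : ∑ i, γ i = p)
    (hPp : MvPolynomial.homogeneousComponent p P = MvPolynomial.monomial γ c)
    (hq : (P - MvPolynomial.homogeneousComponent p P).totalDegree = q) (hqp : q < p) :
    ∀ x : Fin n → K,
      c * (p : K) * MvPolynomial.eval x (MvPolynomial.homogeneousComponent q P) *
          ∏ j, x j ^ (p - q) =
        MvPolynomial.eval (fun _ => (1 : K)) (MvPolynomial.homogeneousComponent q P) *
          MvPolynomial.eval x (MvPolynomial.homogeneousComponent p P) *
          ∑ j, (γ j : K) * ∏ i ∈ Finset.univ.erase j, x i ^ (p - q) := by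
  intro x
  open MvPolynomial in
  have h := eval_eq_of_forall_ne_zero
    (F := C (c * p) * homogeneousComponent q P * ∏ j, X j ^ (p - q))
    (G := C (eval 1 (homogeneousComponent q P)) * homogeneousComponent p P *
      ∑ j, C (γ j : K) * ∏ i ∈ univ.erase j, X i ^ (p - q))
    (fun y hy => by simpa using hbi.mul_eval_mul_prod_eq hdeg.le hp hc hγ hPp hq.le hqp hy) x
  simp only [map_mul, map_sum, map_prod, map_pow, MvPolynomial.eval_C, MvPolynomial.eval_X,
    map_natCast] at h
  exact h

/-- The explicit form of `P_q` in terms of `P_p` (after clearing denominators):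
`c·p·P_q(x)·∏_j x_j^{p−q} = P_q(1)·P_p(x)·Σ_j γ_j·∏_{i ≠ j} x_i^{p−q}`. -/
theorem bisym_Pq_explicit_form
    {K : Type*} [Field K] [CharZero K] {n p q : ℕ}
    (P : MvPolynomial (Fin n) K)
    (hbi : Bisym fun x : Fin n → K => MvPolynomial.eval x P)
    (hdeg : P.totalDegree = p) (hp : 2 ≤ p)
    (c : K) (hc : c ≠ 0) (γ : Fin n →₀ ℕ) (hγ : ∑ i, γ i = p)
    (hPp : MvPolynomial.homogeneousComponent p P = MvPolynomial.monomial γ c)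
    (hne : P ≠ MvPolynomial.homogeneousComponent p P)
    (hq : (P - MvPolynomial.homogeneousComponent p P).totalDegree = q) (hqp : q < p) :
    ∀ x : Fin n → K,
      c * (p : K) * MvPolynomial.eval x (MvPolynomial.homogeneousComponent q P) *
          ∏ j, x j ^ (p - q) =
        MvPolynomial.eval (fun _ => (1 : K)) (MvPolynomial.homogeneousComponent q P) *
          MvPolynomial.eval x (MvPolynomial.homogeneousComponent p P) *
          ∑ j, (γ j : K) * ∏ i ∈ Finset.univ.erase j, x i ^ (p - q) :=
  bisym_Pq_explicit_form_general P hbi hdeg hp c hc γ hγ hPp hq hqp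
end

section
/- Let R be an integral domain of characteristic zero with identity, with fraction field Frac(R), and let P be a polynomial in n indeterminates over R whose evaluation defines a bisymmetric function R^n → R. Then the evaluation of P (viewed via the canonical embedding R[x_1,…,x_n] ⊆ Frac(R)[x_1,…,x_n]) defines a bisymmetric function Frac(R)^n → Frac(R); in other words, every bisymmetric polynomial function on R is the restriction to R of a bisymmetric polynomial function on Frac(R). -/
namespace MvPolynomial

variable {R S σ : Type*} [CommSemiring R] [CommSemiring S]

/-- `P(P(x₁₁, …, x₁ₙ), …, P(xₙ₁, …, xₙₙ))`, with `x i j` the variable `X (i, j)`. -/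
noncomputable def compRows (P : MvPolynomial σ R) : MvPolynomial (σ × σ) R :=
  bind₁ (fun i => rename (Prod.mk i) P) P

/-- `P(P(x₁₁, …, xₙ₁), …, P(x₁ₙ, …, xₙₙ))`, with `x i j` the variable `X (i, j)`. -/
noncomputable def compCols (P : MvPolynomial σ R) : MvPolynomial (σ × σ) R :=
  bind₁ (fun j => rename (fun i => (i, j)) P) P

theorem eval_bind₁ {τ : Type*} (x : τ → R) (g : σ → MvPolynomial τ R) (p : MvPolynomial σ R) :
    eval x (bind₁ g p) = eval (fun i => eval x (g i)) p :=
  eval₂Hom_bind₁ _ _ _ _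

theorem eval_compRows (P : MvPolynomial σ R) (x : σ × σ → R) :
    eval x (compRows P) = eval (fun i => eval (fun j => x (i, j)) P) P := by
  simp only [compRows, eval_bind₁, eval_rename, Function.comp_def]

theorem eval_compCols (P : MvPolynomial σ R) (x : σ × σ → R) :
    eval x (compCols P) = eval (fun j => eval (fun i => x (i, j)) P) P := by
  simp only [compCols, eval_bind₁, eval_rename, Function.comp_def]

theorem map_compRows (f : R →+* S) (P : MvPolynomial σ R) :
    map f (compRows P) = compRows (map f P) := by
  simp only [compRows, map_bind₁, map_rename]

theorem map_compCols (f : R →+* S) (P : MvPolynomial σ R) :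
    map f (compCols P) = compCols (map f P) := by
  simp only [compCols, map_bind₁, map_rename]

theorem bisym_eval_of_compRows_eq_compCols {n : ℕ} {P : MvPolynomial (Fin n) R}
    (h : compRows P = compCols P) : Bisym fun x : Fin n → R => eval x P := fun X => by
  simpa only [eval_compRows, eval_compCols] using congrArg (eval fun p => X p.1 p.2) h

theorem compRows_eq_compCols_of_bisym {R : Type*} [CommRing R] [IsDomain R] [Infinite R]
    {n : ℕ} {P : MvPolynomial (Fin n) R} (h : Bisym fun x : Fin n → R => eval x P) :
    compRows P = compCols P :=
  funext fun x => by
    simpa only [eval_compRows, eval_compCols] using h fun i j => x (i, j)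

end MvPolynomial

/-- A bisymmetric polynomial function over an integral domain of characteristic zero
extends to a bisymmetric polynomial function over its fraction field. -/
theorem bisym_extends_to_fractionRing
    {R : Type*} [CommRing R] [IsDomain R] [CharZero R] {n : ℕ}
    (P : MvPolynomial (Fin n) R)
    (hbi : Bisym fun x : Fin n → R => MvPolynomial.eval x P) :
    Bisym fun x : Fin n → FractionRing R =>
      MvPolynomial.eval x (MvPolynomial.map (algebraMap R (FractionRing R)) P) := by
  apply MvPolynomial.bisym_eval_of_compRows_eq_compCols
  rw [← MvPolynomial.map_compRows, ← MvPolynomial.map_compCols,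
    MvPolynomial.compRows_eq_compCols_of_bisym hbi]
end
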